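/- arXiv:1909.03541 — 7 statements merged into one kernel-verified Lean document; each statement's English description precedes it below -/
import Mathlib

section
/- Let $m,n$ be positive integers and $p$ a prime. The polynomial $T(x)=\Phi_{p^m}(\Phi_{2^n}(x))$, the composition of cyclotomic polynomials, is irreducible over $\mathbb{Q}$. -/
/-!
Let `ζ` be a root of `Φ_{p^m}`. By Capelli's lemma (`Polynomial.irreducible_comp`) it suffices
that `Φ_{2^n}(X) - ζ = X^{2^(n-1)} - (ζ - 1)` is irreducible over `ℚ(ζ)`, and `N(ζ - 1) = ±p`.

Over any extension `K/F`, `X^{2^k} - a` is irreducible as soon as `N_{K/F}(a)^2` is not a fourth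
power in `F`. Indeed `X^2 - a` is then irreducible (`a = b^2` would give `N(a)^2 = N(b)^4`), and a
root `α` of it has `N_{K(α)/F}(α) = N_{K/F}(-a) = ±N_{K/F}(a)`, so by induction `X^{2^k} - α` is
irreducible over `K(α)`; together these give the irreducibility of `X^{2^(k+1)} - a`.
-/

open Polynomial IntermediateField

section TwoPowerKummer

variable {F : Type*} [Field F]

theorem sq_norm_gen_eq_of_minpoly_eq_X_sq_sub_C {K E : Type*} [Field K] [Algebra F K] [Field E]
    [Algebra K E] [Algebra F E] [IsScalarTower F K E] {a : K} {x : E}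
    (hx : minpoly K x = X ^ 2 - C a) :
    Algebra.norm F (AdjoinSimple.gen K x) ^ 2 = Algebra.norm F a ^ 2 := by
  have hint : IsIntegral K x := by
    by_contra h
    exact X_pow_sub_C_ne_zero two_pos a (hx ▸ minpoly.eq_zero h)
  have hnorm : Algebra.norm K (AdjoinSimple.gen K x) = -a := by
    rw [← adjoin.powerBasis_gen hint, Algebra.PowerBasis.norm_gen_eq_coeff_zero_minpoly]
    simp [minpoly_gen, hx]
  rw [← Algebra.norm_norm (S := K), hnorm, ← neg_one_mul, map_mul, mul_pow, ← map_pow]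
  simp

theorem X_pow_two_pow_sub_C_irreducible_of_pow_four_ne_sq_norm (k : ℕ) {K : Type*} [Field K]
    [Algebra F K] {a : K} (ha : ∀ r : F, r ^ 4 ≠ Algebra.norm F a ^ 2) :
    Irreducible (X ^ 2 ^ k - C a) := by
  induction k generalizing K a with
  | zero => simpa using irreducible_X_sub_C a
  | succ k ih =>
    rw [pow_succ]
    refine X_pow_mul_sub_C_irreducible
      (X_pow_sub_C_irreducible_of_prime Nat.prime_two fun b hb ↦ ha (Algebra.norm F b) ?_) ?_
    · rw [← hb, map_pow, ← pow_mul]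
    intro E _ _ x hx
    let : Algebra F E := ((algebraMap K E).comp (algebraMap F K)).toAlgebra
    have : IsScalarTower F K E := IsScalarTower.of_algebraMap_eq' rfl
    exact ih fun r ↦ sq_norm_gen_eq_of_minpoly_eq_X_sq_sub_C (F := F) hx ▸ ha r

end TwoPowerKummer

section Cyclotomic

variable {K L : Type*} [Field K] [Field L] [Algebra K L]

theorem IsPrimitiveRoot.of_minpoly_eq_cyclotomic {n : ℕ} [NeZero (n : K)] {x : L}
    (hx : minpoly K x = cyclotomic n K) : IsPrimitiveRoot x n := by
  have : NeZero (n : L) := NeZero.of_faithfulSMul K L n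
  rw [← isRoot_cyclotomic_iff, ← map_cyclotomic n (algebraMap K L), IsRoot, eval_map,
    ← aeval_def, ← hx, minpoly.aeval]

theorem IsPrimitiveRoot.isCyclotomicExtension_adjoin {n : ℕ} [NeZero n] {ζ : L}
    (hζ : IsPrimitiveRoot ζ n) : IsCyclotomicExtension {n} K K⟮ζ⟯ := by
  change IsCyclotomicExtension {n} K K⟮ζ⟯.toSubalgebra
  rw [adjoin_simple_toSubalgebra_of_isAlgebraic
    (hζ.isIntegral n.pos_of_neZero).tower_top.isAlgebraic]
  exact hζ.adjoin_isCyclotomicExtension K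

theorem IsPrimitiveRoot.sq_norm_sub_one_of_prime_pow {p k : ℕ} [Fact p.Prime]
    [IsCyclotomicExtension {p ^ (k + 1)} K L] {ζ : L} (hζ : IsPrimitiveRoot ζ (p ^ (k + 1)))
    (hirr : Irreducible (cyclotomic (p ^ (k + 1)) K)) :
    Algebra.norm K (ζ - 1) ^ 2 = (p : K) ^ 2 := by
  rcases k with _ | k
  · by_cases hp2 : p = 2
    · subst hp2
      have h := hζ.norm_pow_sub_one_two hirr
      rw [pow_zero, pow_one, pow_one] at h
      rw [h]
      norm_num
    · rw [hζ.norm_sub_one_of_prime_ne_two hirr hp2]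
  · simpa using congrArg (· ^ 2)
      (hζ.norm_pow_sub_one_eq_prime_pow_of_ne_zero hirr k.succ.zero_le k.succ_ne_zero)

end Cyclotomic

theorem cyclotomic_two_pow_succ_sub_C {R : Type*} [CommRing R] (j : ℕ) (a : R) :
    cyclotomic (2 ^ (j + 1)) R - C a = X ^ 2 ^ j - C (a - 1) := by
  rw [cyclotomic_prime_pow_eq_geom_sum Nat.prime_two, C_sub, C_1]
  simp only [Finset.sum_range_succ, Finset.sum_range_zero, pow_zero, pow_one]
  ring

theorem Nat.Prime.rat_pow_four_ne_sq {p : ℕ} (hp : p.Prime) (r : ℚ) : r ^ 4 ≠ (p : ℚ) ^ 2 := by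
  intro h
  rcases sq_eq_sq_iff_eq_or_eq_neg.mp (by rw [← h]; ring : (r ^ 2) ^ 2 = (p : ℚ) ^ 2) with h | h
  · exact hp.not_isSquare (Rat.isSquare_natCast_iff.mp ⟨r, by rw [← h, sq]⟩)
  · have : (0 : ℚ) < p := by exact_mod_cast hp.pos
    nlinarith [sq_nonneg r]

theorem cyclotomic_comp_irreducible (m n p : ℕ) (hm : 0 < m) (hn : 0 < n)
    (hp : p.Prime) :
    Irreducible ((cyclotomic (p ^ m) ℚ).comp (cyclotomic (2 ^ n) ℚ)) := by
  have := Fact.mk hp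
  obtain ⟨k, rfl⟩ := Nat.exists_eq_add_one_of_ne_zero hm.ne'
  obtain ⟨j, rfl⟩ := Nat.exists_eq_add_one_of_ne_zero hn.ne'
  have hirr := cyclotomic.irreducible_rat (pow_pos hp.pos (k + 1))
  refine irreducible_comp (cyclotomic.monic _ _) (cyclotomic.monic _ _) hirr fun E _ _ x hx ↦ ?_
  have hζ : IsPrimitiveRoot x (p ^ (k + 1)) := .of_minpoly_eq_cyclotomic hx
  -- `ℚ⟮x⟯` is also a `ℚ`-algebra as a field of characteristic zero; fix the intermediate-field one.
  let : Algebra ℚ ℚ⟮x⟯ := ℚ⟮x⟯.algebra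
  have := hζ.isCyclotomicExtension_adjoin (K := ℚ)
  have hnorm := (IsPrimitiveRoot.coe_submonoidClass_iff.mp hζ :
    IsPrimitiveRoot (AdjoinSimple.gen ℚ x) _).sq_norm_sub_one_of_prime_pow hirr
  rw [map_cyclotomic, cyclotomic_two_pow_succ_sub_C]
  exact X_pow_two_pow_sub_C_irreducible_of_pow_four_ne_sq_norm j fun r ↦
    hnorm ▸ hp.rat_pow_four_ne_sq r
end

section
/- Let $m,n$ be positive integers with $n\ge 2$ and $p$ a prime. Then $T(x)=\Phi_{p^m}(\Phi_{2^n}(x))$ is $p$-Eisenstein: its leading coefficient is a unit mod $p$, all other coefficients are divisible by $p$, and the constant term equals $p$ (hence is not divisible by $p^2$). -/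
/-!
Modulo `p` one has `Φ_{p^m} = (X - 1)^{φ(p^m)}` and `Φ_{2^n} = X^{2^{n-1}} + 1`, so the composite
reduces to the monomial `X^{2^{n-1} φ(p^m)}`: all lower coefficients vanish mod `p`. Its constant
term is `Φ_{p^m}(Φ_{2^n}(0)) = Φ_{p^m}(1) = p`.
-/

open Polynomial

theorem Polynomial.Monic.isEisensteinAt_of_map_eq_X_pow {R : Type*} [CommRing R] {P : Ideal R}
    {f : R[X]} {N : ℕ} (hf : f.Monic) (hP : P ≠ ⊤) (hmap : f.map (Ideal.Quotient.mk P) = X ^ N)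
    (h0 : f.coeff 0 ∉ P ^ 2) : f.IsEisensteinAt P := by
  have : Nontrivial (R ⧸ P) := Ideal.Quotient.nontrivial_iff.2 hP
  have hdeg : f.natDegree = N := by
    simpa [hmap] using (hf.natDegree_map (Ideal.Quotient.mk P)).symm
  refine hf.isEisensteinAt_of_mem_of_notMem hP (fun {i} hi => ?_) h0
  rw [← Ideal.Quotient.eq_zero_iff_mem, ← coeff_map, hmap, coeff_X_pow, if_neg (hdeg ▸ hi).ne]

theorem cyclotomic_prime_pow_eq_X_sub_one_pow (R : Type*) [Ring R] {p k : ℕ} [Fact p.Prime]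
    [CharP R p] (hk : 0 < k) : cyclotomic (p ^ k) R = (X - 1) ^ (p ^ k - p ^ (k - 1)) := by
  simpa using cyclotomic_mul_prime_pow_eq R (m := 1) (Fact.out : p.Prime).not_dvd_one hk

theorem cyclotomic_two_pow_succ (R : Type*) [CommRing R] (l : ℕ) :
    cyclotomic (2 ^ (l + 1)) R = X ^ 2 ^ l + 1 := by
  rw [cyclotomic_prime_pow_eq_geom_sum Nat.prime_two, Finset.sum_range_succ, Finset.sum_range_one]
  ring

theorem cyclotomic_prime_pow_comp_cyclotomic_two_pow_succ (R : Type*) [CommRing R] {p k : ℕ}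
    [Fact p.Prime] [CharP R p] (hk : 0 < k) (l : ℕ) :
    (cyclotomic (p ^ k) R).comp (cyclotomic (2 ^ (l + 1)) R) =
      X ^ (2 ^ l * (p ^ k - p ^ (k - 1))) := by
  rw [cyclotomic_prime_pow_eq_X_sub_one_pow R hk, cyclotomic_two_pow_succ, pow_comp, sub_comp,
    X_comp, one_comp, add_sub_cancel_right, pow_mul]

theorem cyclotomic_prime_pow_comp_cyclotomic_coeff_zero (R : Type*) [CommRing R] {p k n : ℕ}
    [Fact p.Prime] (hk : 0 < k) (hn : 1 < n) :
    ((cyclotomic (p ^ k) R).comp (cyclotomic n R)).coeff 0 = p := by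
  obtain ⟨k, rfl⟩ : ∃ j, k = j + 1 := ⟨k - 1, by omega⟩
  rw [coeff_zero_eq_eval_zero, eval_comp, ← coeff_zero_eq_eval_zero, cyclotomic_coeff_zero R hn,
    eval_one_cyclotomic_prime_pow]

theorem cyclotomic_comp_isEisensteinAt (m n p : ℕ) (hm : 0 < m) (hn : 2 ≤ n)
    (hp : p.Prime) :
    ((cyclotomic (p ^ m) ℤ).comp (cyclotomic (2 ^ n) ℤ)).IsEisensteinAt
      (Ideal.span {(p : ℤ)}) ∧
    ((cyclotomic (p ^ m) ℤ).comp (cyclotomic (2 ^ n) ℤ)).coeff 0 = p := by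
  have : Fact p.Prime := ⟨hp⟩
  have : CharP (ℤ ⧸ Ideal.span {(p : ℤ)}) p := ringChar.of_eq (Int.ringChar_idealQuot p)
  have hpZ : Prime (p : ℤ) := Nat.prime_iff_prime_int.1 hp
  obtain ⟨l, rfl⟩ : ∃ l, n = l + 1 := ⟨n - 1, by omega⟩
  set T := (cyclotomic (p ^ m) ℤ).comp (cyclotomic (2 ^ (l + 1)) ℤ)
  have hcoeff : T.coeff 0 = p :=
    cyclotomic_prime_pow_comp_cyclotomic_coeff_zero ℤ hm (Nat.one_lt_two_pow l.succ_ne_zero)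
  have hmonic : T.Monic := (cyclotomic.monic _ ℤ).comp (cyclotomic.monic _ ℤ)
    (by rw [natDegree_cyclotomic]; exact (Nat.totient_pos.2 (by positivity)).ne')
  have hmod : T.map (Ideal.Quotient.mk (Ideal.span {(p : ℤ)})) =
      X ^ (2 ^ l * (p ^ m - p ^ (m - 1))) := by
    rw [Polynomial.map_comp, map_cyclotomic, map_cyclotomic]
    exact cyclotomic_prime_pow_comp_cyclotomic_two_pow_succ _ hm l
  refine ⟨hmonic.isEisensteinAt_of_map_eq_X_pow
    ((Ideal.span_singleton_prime hpZ.ne_zero).2 hpZ).ne_top hmod ?_, hcoeff⟩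
  rw [hcoeff, Ideal.span_singleton_pow, Ideal.mem_span_singleton]
  nth_rewrite 2 [← pow_one (p : ℤ)]
  exact (pow_dvd_pow_iff hpZ.ne_zero hpZ.not_isUnit).not.2 (by omega)
end

section
/- Let $0<m<n$ be integers. The resultant $R(\Phi_m,\Phi_n)$ equals $p^{\phi(m)}$ if $n/m$ is a power $p^a$ ($a\ge 1$) of a prime $p$, and equals $1$ otherwise. -/
open Polynomial

/-- The resultant of two polynomials `f, g ∈ ℚ[x]`, computed in `ℂ` as
`R(f,g) = a^{deg g} ∏_{f(r)=0} g(r)` where `a` is the leading coefficient of `f`. -/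
noncomputable def res (f g : Polynomial ℚ) : ℂ :=
  (f.leadingCoeff : ℂ) ^ g.natDegree * ((f.aroots ℂ).map (fun r => aeval r g)).prod

/-!
Write `P_k` for the primitive `k`-th roots of unity. For `m ≠ 0`,
`R(Φ_m, Φ_n) = ∏_{ζ ∈ P_m} Φ_n(ζ)`, and for `n > 2`, where `φ(n)` is even, this equals
`∏_{η ∈ P_n} Φ_m(η)`. Over the divisors `m` of `k` these products multiply to
`∏_{η ∈ P_n} (η^k - 1)`. Since `η ↦ η^k` maps `P_n` onto `P_{n'}`, `n' = n / gcd(n, k)`, with all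
fibres of size `φ(n) / φ(n')`, that product is `Φ_{n'}(1)^{φ(n)/φ(n')}`. As `Φ_j(1)` is `p` when
`j > 1` is a power of the prime `p` and `1` otherwise, the claimed values satisfy the same
divisor-product identity; being nonzero, they are determined by it through strong induction on `m`.
-/

open Finset

theorem MonoidHom.prod_comp_of_surjective {G H M : Type*} [Group G] [Group H] [Fintype G]
    [Fintype H] [CommMonoid M] (π : G →* H) (hπ : Function.Surjective π) (F : H → M) :
    ∏ g, F (π g) = (∏ h, F h) ^ (Fintype.card G / Fintype.card H) := by
  classical
  set c := #{g | π g = 1}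
  have hfiber (h : H) : #{g | π g = h} = c :=
    card_fiber_eq_of_mem_range π (hπ h) ⟨1, map_one π⟩
  have hcard : Fintype.card G = Fintype.card H * c := by
    rw [← card_univ, card_eq_sum_card_fiberwise (fun g _ => mem_univ (π g))]
    simp [hfiber]
  rw [hcard, Nat.mul_div_cancel_left _ Fintype.card_pos, Finset.prod_comp,
    image_univ_of_surjective hπ, ← prod_pow]
  simp_rw [hfiber]

theorem Nat.sum_divisors_totient_mul_div {P u : ℕ} (h : P.Coprime u) :
    ∑ d ∈ P.divisors, (P * u / d).totient = P * u.totient := by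
  calc ∑ d ∈ P.divisors, (P * u / d).totient
      = ∑ d ∈ P.divisors, (P / d).totient * u.totient := by
        refine sum_congr rfl fun d hd => ?_
        have hdP := Nat.dvd_of_mem_divisors hd
        rw [Nat.mul_div_right_comm hdP, Nat.totient_mul (h.coprime_div_left hdP)]
    _ = P * u.totient := by rw [← sum_mul, Nat.sum_div_divisors P Nat.totient, Nat.sum_totient]

theorem Nat.totient_prime_pow_mul {p k g : ℕ} (hp : p.Prime) (hk : k ≠ 0) (hg : g ≠ 0) :
    (p ^ k * g).totient = ordProj[p] g * (ordCompl[p] g).totient * (p ^ k).totient := by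
  obtain ⟨k, rfl⟩ := Nat.exists_eq_add_one_of_ne_zero hk
  conv_lhs => rw [← Nat.ordProj_mul_ordCompl_eq_self g p, ← mul_assoc, ← pow_add,
    Nat.totient_mul ((Nat.coprime_ordCompl hp hg).pow_left _), add_right_comm,
    Nat.totient_prime_pow_succ hp]
  rw [Nat.totient_prime_pow_succ hp, pow_add]
  ring

theorem eq_of_prod_divisors_eq {M₀ : Type*} [CommMonoidWithZero M₀] [IsCancelMulZero M₀]
    [Nontrivial M₀] {f g : ℕ → M₀} {N : ℕ}
    (hg : ∀ d, d ≠ 0 → d < N → g d ≠ 0)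
    (h : ∀ m, m ≠ 0 → m < N → ∏ d ∈ m.divisors, f d = ∏ d ∈ m.divisors, g d) :
    ∀ m, m ≠ 0 → m < N → f m = g m := by
  intro m
  induction m using Nat.strong_induction_on with
  | _ m ih =>
    intro hm hmN
    have hproper : ∏ d ∈ m.properDivisors, f d = ∏ d ∈ m.properDivisors, g d :=
      prod_congr rfl fun d hd =>
        have hdm := Nat.mem_properDivisors.1 hd
        ih d hdm.2 (Nat.pos_of_mem_properDivisors hd).ne' (hdm.2.trans hmN)
    have hne : ∏ d ∈ m.properDivisors, g d ≠ 0 :=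
      prod_ne_zero_iff.2 fun d hd =>
        hg d (Nat.pos_of_mem_properDivisors hd).ne' ((Nat.mem_properDivisors.1 hd).2.trans hmN)
    have hm' := h m hm hmN
    rw [← Nat.cons_self_properDivisors hm, prod_cons, prod_cons, hproper] at hm'
    exact mul_right_cancel₀ hne hm'

namespace IsPrimitiveRoot

theorem pow_div_gcd {M : Type*} [CommMonoid M] {ζ : M} {n m : ℕ}
    (h : IsPrimitiveRoot ζ n) (hm : m ≠ 0) : IsPrimitiveRoot (ζ ^ m) (n / n.gcd m) := by
  rw [IsPrimitiveRoot.iff_orderOf, orderOf_pow' ζ hm, ← h.eq_orderOf]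

variable {R M : Type*} [CommRing R] [IsDomain R] [CommMonoid M] {n : ℕ} {ζ : R}

theorem prod_primitiveRoots_eq_prod_units [NeZero n] (h : IsPrimitiveRoot ζ n) (f : R → M) :
    ∏ η ∈ primitiveRoots n R, f η = ∏ u : (ZMod n)ˣ, f (ζ ^ (u : ZMod n).val) := by
  have hn : 0 < n := Nat.pos_of_neZero n
  refine (prod_nbij (fun u : (ZMod n)ˣ => ζ ^ (u : ZMod n).val) ?_ ?_ ?_ fun _ _ => rfl).symm
  · intro u _
    exact (mem_primitiveRoots hn).2 (h.pow_of_coprime _ (ZMod.val_coe_unit_coprime u))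
  · intro u _ v _ huv
    exact Units.ext (ZMod.val_injective n (h.pow_inj (ZMod.val_lt _) (ZMod.val_lt _) huv))
  · intro η hη
    obtain ⟨i, hin, hi, rfl⟩ := h.isPrimitiveRoot_iff.1 ((mem_primitiveRoots hn).1 hη)
    exact ⟨ZMod.unitOfCoprime i hi, mem_coe.2 (mem_univ _), by
      simp [ZMod.val_natCast, Nat.mod_eq_of_lt hin]⟩

-- Under `primitiveRoots n R ≃ (ZMod n)ˣ`, raising to the `m`-th power becomes reduction modulo
-- `n / n.gcd m`, a surjective group homomorphism.
theorem prod_primitiveRoots_pow [NeZero n] (h : IsPrimitiveRoot ζ n) {m : ℕ} (hm : m ≠ 0)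
    (f : R → M) :
    ∏ η ∈ primitiveRoots n R, f (η ^ m) =
      (∏ ξ ∈ primitiveRoots (n / n.gcd m) R, f ξ) ^ (n.totient / (n / n.gcd m).totient) := by
  set n' := n / n.gcd m
  have hn'n : n' ∣ n := Nat.div_dvd_of_dvd (Nat.gcd_dvd_left n m)
  have : NeZero n' := ⟨fun h0 => NeZero.ne n (Nat.eq_zero_of_zero_dvd (h0 ▸ hn'n))⟩
  have hψ : IsPrimitiveRoot (ζ ^ m) n' := h.pow_div_gcd hm
  have hpow (u : (ZMod n)ˣ) :
      (ζ ^ (u : ZMod n).val) ^ m = (ζ ^ m) ^ (ZMod.unitsMap hn'n u : ZMod n').val := by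
    rw [← pow_mul, mul_comm, pow_mul, ZMod.unitsMap_val, ← ZMod.natCast_val, ZMod.val_natCast,
      hψ.eq_orderOf, pow_mod_orderOf]
  rw [h.prod_primitiveRoots_eq_prod_units, hψ.prod_primitiveRoots_eq_prod_units,
    ← ZMod.card_units_eq_totient, ← ZMod.card_units_eq_totient,
    ← MonoidHom.prod_comp_of_surjective _ (ZMod.unitsMap_surjective hn'n)]
  simp_rw [hpow]

theorem eval_cyclotomic_eq_prod (h : IsPrimitiveRoot ζ n) (x : R) :
    eval x (cyclotomic n R) = ∏ η ∈ primitiveRoots n R, (x - η) := by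
  simp [cyclotomic_eq_prod_X_sub_primitiveRoots h, eval_prod]

theorem prod_primitiveRoots_one_sub_pow [NeZero n] (h : IsPrimitiveRoot ζ n) {m : ℕ}
    (hm : m ≠ 0) :
    ∏ η ∈ primitiveRoots n R, (1 - η ^ m) =
      eval 1 (cyclotomic (n / n.gcd m) R) ^ (n.totient / (n / n.gcd m).totient) := by
  rw [h.prod_primitiveRoots_pow hm (1 - ·), (h.pow_div_gcd hm).eval_cyclotomic_eq_prod]

theorem prod_eval_cyclotomic_comm {m : ℕ} {η : R} (hζ : IsPrimitiveRoot ζ m)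
    (hη : IsPrimitiveRoot η n) :
    ∏ x ∈ primitiveRoots m R, eval x (cyclotomic n R) =
      (-1) ^ (m.totient * n.totient) * ∏ y ∈ primitiveRoots n R, eval y (cyclotomic m R) := by
  simp only [hζ.eval_cyclotomic_eq_prod, hη.eval_cyclotomic_eq_prod]
  rw [prod_comm, pow_mul, ← hζ.card_primitiveRoots, ← hη.card_primitiveRoots, ← prod_const,
    ← prod_mul_distrib]
  refine prod_congr rfl fun y _ => ?_
  rw [← prod_neg]
  simp only [neg_sub]

end IsPrimitiveRoot

theorem prod_divisors_prod_eval_cyclotomic {R : Type*} [CommRing R] (s : Finset R) {m : ℕ}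
    (hm : m ≠ 0) :
    ∏ d ∈ m.divisors, ∏ x ∈ s, eval x (cyclotomic d R) = ∏ x ∈ s, (x ^ m - 1) := by
  rw [prod_comm]
  refine prod_congr rfl fun x _ => ?_
  rw [← eval_prod, prod_cyclotomic_eq_X_pow_sub_one (Nat.pos_of_ne_zero hm)]
  simp

section EvalOne

variable {R : Type*} [CommRing R]

theorem eval_one_cyclotomic_of_not_isPrimePow {k : ℕ} (hk : k ≠ 1) (h : ¬IsPrimePow k) :
    eval 1 (cyclotomic k R) = 1 := by
  refine eval_one_cyclotomic_not_prime_pow fun {p} hp i hpi => h ?_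
  rcases i.eq_zero_or_pos with rfl | hi
  · exact absurd hpi.symm (by simpa using hk)
  · exact (isPrimePow_nat_iff k).2 ⟨p, i, hp, hi, hpi⟩

theorem eval_one_cyclotomic_mul_of_not_isPrimePow {k : ℕ} (hk : k ≠ 1) (h : ¬IsPrimePow k)
    (d : ℕ) : eval 1 (cyclotomic (k * d) R) = 1 := by
  refine eval_one_cyclotomic_of_not_isPrimePow (fun hkd => hk (Nat.eq_one_of_mul_eq_one_right hkd))
    fun hkd => h (hkd.dvd (dvd_mul_right k d) hk)

-- For `d ∣ g`, the condition `d ∣ ordProj[p] g` says that `d` is a power of `p`.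
theorem eval_one_cyclotomic_prime_pow_mul {p k g d : ℕ} (hp : p.Prime) (hk : k ≠ 0)
    (hg : g ≠ 0) (hd : d ∣ g) :
    eval 1 (cyclotomic (p ^ k * d) R) = if d ∣ ordProj[p] g then (p : R) else 1 := by
  have : Fact p.Prime := ⟨hp⟩
  split_ifs with hdp
  · obtain ⟨i, -, rfl⟩ := (Nat.dvd_prime_pow hp).1 hdp
    obtain ⟨j, hj⟩ := Nat.exists_eq_succ_of_ne_zero (show k + i ≠ 0 by omega)
    rw [← pow_add, hj, eval_one_cyclotomic_prime_pow]
  · refine eval_one_cyclotomic_not_prime_pow fun {q} hq j hqj => hdp ?_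
    have hpq : p = q := (Nat.prime_dvd_prime_iff_eq hp hq).1 <| hp.dvd_of_dvd_pow <|
      hqj ▸ (dvd_pow_self p hk).mul_right d
    subst hpq
    obtain ⟨i, -, rfl⟩ := (Nat.dvd_prime_pow hp).1 (hqj ▸ dvd_mul_left d (p ^ k))
    exact pow_dvd_pow p ((hp.pow_dvd_iff_le_factorization hg).1 hd)

theorem prod_divisors_eval_one_cyclotomic_mul {n' g : ℕ} (hn' : n' ≠ 1) (hg : g ≠ 0) :
    ∏ d ∈ g.divisors, eval 1 (cyclotomic (n' * d) R) ^ (g / d).totient =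
      eval 1 (cyclotomic n' R) ^ ((n' * g).totient / n'.totient) := by
  by_cases hpp : IsPrimePow n'
  · obtain ⟨p, k, hp, hk, rfl⟩ := (isPrimePow_nat_iff n').1 hpp
    have hdivisors : {d ∈ g.divisors | d ∣ ordProj[p] g} = (ordProj[p] g).divisors := by
      ext d
      simp only [mem_filter, Nat.mem_divisors]
      exact ⟨fun ⟨_, hd⟩ => ⟨hd, (pow_pos hp.pos _).ne'⟩,
        fun ⟨hd, _⟩ => ⟨⟨hd.trans (Nat.ordProj_dvd g p), hg⟩, hd⟩⟩
    calc ∏ d ∈ g.divisors, eval 1 (cyclotomic (p ^ k * d) R) ^ (g / d).totient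
        = ∏ d ∈ g.divisors, if d ∣ ordProj[p] g then (p : R) ^ (g / d).totient else 1 := by
          refine prod_congr rfl fun d hd => ?_
          rw [eval_one_cyclotomic_prime_pow_mul hp hk.ne' hg (Nat.dvd_of_mem_divisors hd)]
          split_ifs <;> simp
      _ = (p : R) ^ (ordProj[p] g * (ordCompl[p] g).totient) := by
          rw [← prod_filter, hdivisors, prod_pow_eq_pow_sum]
          conv_lhs => enter [2, 2, d]; rw [← Nat.ordProj_mul_ordCompl_eq_self g p]
          rw [Nat.sum_divisors_totient_mul_div ((Nat.coprime_ordCompl hp hg).pow_left _)]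
      _ = eval 1 (cyclotomic (p ^ k) R) ^ ((p ^ k * g).totient / (p ^ k).totient) := by
          obtain ⟨k, rfl⟩ := Nat.exists_eq_add_one_of_ne_zero hk.ne'
          have : Fact p.Prime := ⟨hp⟩
          rw [eval_one_cyclotomic_prime_pow, Nat.totient_prime_pow_mul hp hk.ne' hg,
            Nat.mul_div_cancel _ (Nat.totient_pos.2 (pow_pos hp.pos _))]
  · simp [eval_one_cyclotomic_mul_of_not_isPrimePow hn' hpp,
      eval_one_cyclotomic_of_not_isPrimePow hn' hpp]

end EvalOne

theorem eval_one_cyclotomic_ne_zero {R : Type*} [CommRing R] [IsDomain R] [CharZero R] {k : ℕ}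
    (hk : k ≠ 1) : eval 1 (cyclotomic k R) ≠ 0 := by
  rcases eq_or_ne k 0 with rfl | hk0
  · simp
  have := NeZero.mk hk0
  rw [Ne, ← IsRoot.def, isRoot_cyclotomic_iff, IsPrimitiveRoot.one_left_iff]
  exact hk

noncomputable def cyclotomicResultantFormula (m n : ℕ) : ℂ :=
  if m ∣ n then eval 1 (cyclotomic (n / m) ℂ) ^ m.totient else 1

theorem cyclotomicResultantFormula_ne_zero {m n : ℕ} (hmn : m < n) :
    cyclotomicResultantFormula m n ≠ 0 := by
  unfold cyclotomicResultantFormula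
  split_ifs with hm
  · exact pow_ne_zero _ (eval_one_cyclotomic_ne_zero fun h =>
      hmn.ne (Nat.eq_of_dvd_of_div_eq_one hm h))
  · exact one_ne_zero

theorem prod_divisors_cyclotomicResultantFormula {m n : ℕ} (hm : m ≠ 0) (hn : n ≠ 0)
    (hnm : ¬n ∣ m) :
    ∏ d ∈ m.divisors, cyclotomicResultantFormula d n =
      eval 1 (cyclotomic (n / n.gcd m) ℂ) ^ (n.totient / (n / n.gcd m).totient) := by
  set g := n.gcd m
  have hg : g ≠ 0 := Nat.gcd_ne_zero_left hn
  have hgn : g ∣ n := Nat.gcd_dvd_left n m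
  have hdivisors : {d ∈ m.divisors | d ∣ n} = g.divisors := by
    ext d
    simp only [mem_filter, Nat.mem_divisors, Nat.dvd_gcd_iff, g]
    tauto
  have hquot (d : ℕ) (hd : d ∣ g) : n / (g / d) = n / g * d := by
    conv_lhs => rw [← Nat.div_mul_cancel hgn]
    rw [Nat.mul_div_assoc _ (Nat.div_dvd_of_dvd hd), Nat.div_div_self hd hg]
  have hn' : n / g ≠ 1 := fun h =>
    hnm (Nat.eq_of_dvd_of_div_eq_one hgn h ▸ Nat.gcd_dvd_right n m)
  calc ∏ d ∈ m.divisors, cyclotomicResultantFormula d n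
      = ∏ d ∈ g.divisors, eval 1 (cyclotomic (n / d) ℂ) ^ d.totient := by
        rw [← hdivisors, prod_filter]
        rfl
    _ = ∏ d ∈ g.divisors, eval 1 (cyclotomic (n / g * d) ℂ) ^ (g / d).totient := by
        rw [← Nat.prod_div_divisors g]
        refine prod_congr rfl fun d hd => ?_
        rw [hquot d (Nat.dvd_of_mem_divisors hd)]
    _ = _ := by
        rw [prod_divisors_eval_one_cyclotomic_mul hn' hg, Nat.div_mul_cancel hgn]

theorem prod_primitiveRoots_eval_cyclotomic {m n : ℕ} (hm : m ≠ 0) (hmn : m < n) (hn : 2 < n) :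
    ∏ η ∈ primitiveRoots n ℂ, eval η (cyclotomic m ℂ) = cyclotomicResultantFormula m n := by
  have hn0 : n ≠ 0 := by omega
  have := NeZero.mk hn0
  have hζ := Complex.isPrimitiveRoot_exp n hn0
  refine eq_of_prod_divisors_eq
    (f := fun k => ∏ η ∈ primitiveRoots n ℂ, eval η (cyclotomic k ℂ))
    (fun d _ hd => cyclotomicResultantFormula_ne_zero hd) (fun k hk hkn => ?_) m hm hmn
  have hnk : ¬n ∣ k := fun h => (Nat.le_of_dvd (Nat.pos_of_ne_zero hk) h).not_gt hkn
  rw [prod_divisors_prod_eval_cyclotomic _ hk,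
    prod_divisors_cyclotomicResultantFormula hk hn0 hnk, ← hζ.prod_primitiveRoots_one_sub_pow hk]
  conv_lhs => enter [2, x]; rw [← neg_sub]
  rw [prod_neg, hζ.card_primitiveRoots, (Nat.totient_even hn).neg_one_pow, one_mul]

theorem res_cyclotomic {m n : ℕ} (hm : m ≠ 0) :
    res (cyclotomic m ℚ) (cyclotomic n ℚ) = ∏ ζ ∈ primitiveRoots m ℂ, eval ζ (cyclotomic n ℂ) := by
  have hroots : (cyclotomic m ℚ).aroots ℂ = (primitiveRoots m ℂ).val := by
    rw [aroots_def, map_cyclotomic,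
      cyclotomic_eq_prod_X_sub_primitiveRoots (Complex.isPrimitiveRoot_exp m hm),
      roots_prod_X_sub_C]
  have heval (x : ℂ) : aeval x (cyclotomic n ℚ) = eval x (cyclotomic n ℂ) := by
    rw [aeval_def, ← eval_map, map_cyclotomic]
  simp only [res, (cyclotomic.monic m ℚ).leadingCoeff, Rat.cast_one, one_pow, one_mul, hroots,
    heval]
  rfl

theorem res_cyclotomic_eq_formula {m n : ℕ} (hm : m ≠ 0) (hmn : m < n) :
    res (cyclotomic m ℚ) (cyclotomic n ℚ) = cyclotomicResultantFormula m n := by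
  rcases le_or_gt n 2 with hn | hn
  · obtain ⟨rfl, rfl⟩ : m = 1 ∧ n = 2 := by omega
    rw [res_cyclotomic one_ne_zero, IsPrimitiveRoot.primitiveRoots_one, prod_singleton]
    simp [cyclotomicResultantFormula]
  · rw [res_cyclotomic hm, (Complex.isPrimitiveRoot_exp m hm).prod_eval_cyclotomic_comm
      (Complex.isPrimitiveRoot_exp n (by omega)), ((Nat.totient_even hn).mul_left _).neg_one_pow,
      one_mul, prod_primitiveRoots_eval_cyclotomic hm hmn hn]

theorem resultant_cyclotomic (m n : ℕ) (hm : 0 < m) (hmn : m < n) :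
    (∀ p a : ℕ, p.Prime → 1 ≤ a → n = m * p ^ a →
      res (cyclotomic m ℚ) (cyclotomic n ℚ) = (p : ℂ) ^ m.totient) ∧
    ((¬ ∃ p a : ℕ, p.Prime ∧ 1 ≤ a ∧ n = m * p ^ a) →
      res (cyclotomic m ℚ) (cyclotomic n ℚ) = 1) := by
  rw [res_cyclotomic_eq_formula hm.ne' hmn, cyclotomicResultantFormula]
  constructor
  · rintro p a hp ha rfl
    obtain ⟨a, rfl⟩ := Nat.exists_eq_add_one_of_ne_zero (by omega : a ≠ 0)
    have : Fact p.Prime := ⟨hp⟩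
    rw [if_pos (dvd_mul_right m _), Nat.mul_div_cancel_left _ hm, eval_one_cyclotomic_prime_pow]
  · intro hnot
    split_ifs with hdvd
    · have hquot : n / m ≠ 1 := fun h => hmn.ne (Nat.eq_of_dvd_of_div_eq_one hdvd h)
      have hpp : ¬IsPrimePow (n / m) := by
        rintro ⟨p, a, hp, ha, hpa⟩
        exact hnot ⟨p, a, hp.nat_prime, ha, by rw [hpa, Nat.mul_div_cancel' hdvd]⟩
      rw [eval_one_cyclotomic_of_not_isPrimePow hquot hpp, one_pow]
    · rfl
end

section
/- Let $f,g\in\mathbb{Q}[x]$ with leading coefficients $a,b$ and degrees $m,n$ respectively (with $m,n\ge 1$). Then $\Delta(f\circ g)=(-1)^{m^2 n(n-1)/2}\, a^{n-1} b^{m(mn-n-1)}\, \Delta(f)^n\, R(f\circ g, g')$. -/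
/-!
The roots of `f ∘ g` are the fibres `g⁻¹(r)` over the roots `r` of `f`, each fibre having `n`
points counted with multiplicity. With the chain rule `(f ∘ g)'(s) = f'(g(s)) g'(s)` this gives
`∏ (f ∘ g)'(s) = (∏ f'(r))ⁿ ∏ g'(s)`, where `s` and `r` run over the roots of `f ∘ g` and of `f`.
What remains is bookkeeping of leading coefficients and signs, the sign exponents being related by
`C(mn, 2) = m² C(n, 2) + n C(m, 2)`.
-/
open Polynomial

/-- The discriminant of a polynomial `f ∈ ℚ[x]`:
`Δ(f) = (-1)^{m(m-1)/2} / a * R(f, f')`. -/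
noncomputable def disc (f : Polynomial ℚ) : ℂ :=
  (-1 : ℂ) ^ (f.natDegree * (f.natDegree - 1) / 2) / (f.leadingCoeff : ℂ) *
    res f (derivative f)

theorem Nat.mul_mul_sub_one_div_two (m n : ℕ) :
    m * n * (m * n - 1) / 2 = m ^ 2 * n * (n - 1) / 2 + m * (m - 1) / 2 * n := by
  have hm := (Nat.even_mul_pred_self m).two_dvd
  have hn := (Nat.even_mul_pred_self n).two_dvd
  have key : m * n * (m * n - 1) = m ^ 2 * (n * (n - 1)) + m * (m - 1) * n := by
    rcases Nat.eq_zero_or_pos (m * n) with h | h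
    · rcases Nat.mul_eq_zero.mp h with rfl | rfl <;> simp
    · zify [h, Nat.pos_of_mul_pos_right h, Nat.pos_of_mul_pos_left h]
      ring
  rw [key, Nat.add_div_of_dvd_right (dvd_mul_of_dvd_right hn _), mul_assoc (m ^ 2),
    Nat.mul_div_assoc _ hn, Nat.div_mul_right_comm hm]

namespace Polynomial

section IsAlgClosed

variable {K : Type*} [Field K] [IsAlgClosed K]

theorem roots_comp_of_isAlgClosed {F G : K[X]} (hF : F ≠ 0) (hG : 0 < G.natDegree) :
    (F.comp G).roots = F.roots.bind fun r => (G - C r).roots := by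
  have hG_sub : ∀ r : K, G - C r ≠ 0 := fun r h => by
    have := congrArg natDegree h
    rw [natDegree_sub_C, natDegree_zero] at this
    omega
  conv_lhs => rw [(IsAlgClosed.splits F).eq_prod_roots]
  rw [mul_comp, C_comp, multiset_prod_comp, Multiset.map_map, roots_C_mul _ (by simpa),
    roots_multiset_prod _ (by simpa using fun r _ _ => hG_sub r), Multiset.bind_map]
  simp [sub_comp]

end IsAlgClosed

section Algebra

variable {K L : Type*} [Field K] [Field L] [IsAlgClosed L] [Algebra K L] {f g : K[X]}

theorem aroots_comp_of_isAlgClosed (hf : f ≠ 0) (hg : 0 < g.natDegree) :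
    (f.comp g).aroots L = (f.aroots L).bind fun r => (g.map (algebraMap K L) - C r).roots := by
  rw [aroots_def, Polynomial.map_comp]
  exact roots_comp_of_isAlgClosed (by simpa) (by rwa [natDegree_map])

theorem prod_aroots_comp_map_aeval {M : Type*} [CommMonoid M] (φ : L → M) (hf : f ≠ 0)
    (hg : 0 < g.natDegree) :
    (((f.comp g).aroots L).map fun s => φ (aeval s g)).prod =
      ((f.aroots L).map φ).prod ^ g.natDegree := by
  rw [aroots_comp_of_isAlgClosed hf hg, Multiset.map_bind, Multiset.prod_bind,
    ← Multiset.prod_map_pow]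
  refine congrArg Multiset.prod (Multiset.map_congr rfl fun r _ => ?_)
  have hfiber : ∀ s ∈ (g.map (algebraMap K L) - C r).roots, φ (aeval s g) = φ r := fun s hs => by
    rw [← eval_map_algebraMap, (mem_roots_sub_C'.mp hs).2]
  rw [Multiset.map_congr rfl hfiber, Multiset.map_const', Multiset.prod_replicate,
    IsAlgClosed.card_roots_eq_natDegree, natDegree_sub_C, natDegree_map]

theorem prod_aroots_comp_aeval_derivative (hf : f ≠ 0) (hg : 0 < g.natDegree) :
    (((f.comp g).aroots L).map fun s => aeval s (derivative (f.comp g))).prod =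
      ((f.aroots L).map fun r => aeval r (derivative f)).prod ^ g.natDegree *
        (((f.comp g).aroots L).map fun s => aeval s (derivative g)).prod := by
  rw [← prod_aroots_comp_map_aeval _ hf hg, ← Multiset.prod_map_mul]
  simp only [derivative_comp, map_mul, aeval_comp]
  exact congrArg Multiset.prod (Multiset.map_congr rfl fun _ _ => mul_comm _ _)

end Algebra

end Polynomial

theorem disc_comp (f g : Polynomial ℚ) (m n : ℕ) (a b : ℚ)
    (hm : 1 ≤ m) (hn : 1 ≤ n) (hfm : f.natDegree = m) (hgn : g.natDegree = n)
    (ha : f.leadingCoeff = a) (hb : g.leadingCoeff = b) :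
    disc (f.comp g) =
      (-1 : ℂ) ^ (m ^ 2 * n * (n - 1) / 2) * (a : ℂ) ^ (n - 1) *
        (b : ℂ) ^ ((m : ℤ) * ((m : ℤ) * n - n - 1)) * disc f ^ n *
        res (f.comp g) (derivative g) := by
  obtain ⟨M, rfl⟩ : ∃ M, m = M + 1 := ⟨m - 1, by omega⟩
  obtain ⟨N, rfl⟩ : ∃ N, n = N + 1 := ⟨n - 1, by omega⟩
  subst ha hb
  have hf : f ≠ 0 := by rintro rfl; simp at hfm
  have hg : 0 < g.natDegree := by omega
  have hB : (g.leadingCoeff : ℂ) ≠ 0 := by simpa using ne_zero_of_natDegree_gt hg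
  have hA : (f.leadingCoeff : ℂ) ≠ 0 := by simpa using hf
  have hexp : ((M + 1 : ℕ) : ℤ) * ((M + 1 : ℕ) * (N + 1 : ℕ) - (N + 1 : ℕ) - 1) =
      ((M ^ 2 * N + M * N + M ^ 2 : ℕ) : ℤ) - 1 := by push_cast; ring
  rw [disc, disc, res, res, res, natDegree_comp, leadingCoeff_comp hg.ne',
    natDegree_derivative, natDegree_derivative, natDegree_derivative, natDegree_comp,
    prod_aroots_comp_aeval_derivative hf hg, Nat.mul_mul_sub_one_div_two, pow_add, pow_mul,
    hfm, hgn, hexp, zpow_sub₀ hB, zpow_natCast, zpow_one,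
    show (M + 1) * (N + 1) - 1 = M * N + M + N by ring_nf; omega]
  simp only [Nat.add_sub_cancel, Rat.cast_mul, Rat.cast_pow, mul_pow, div_pow]
  field_simp
  ring
end

section
/- Let $f(x)\in\mathbb{Q}[x]$ be of degree $m\ge 1$ with leading coefficient $a$, and let $g(x)=bx^n+c$ with $b\ne 0$, $n\ge 1$. Then $\Delta(f\circ g)=(-1)^{mn(n-1)(m+2n)/2}\, a^{n-1} b^{m(mn-1)}\, \Delta(f)^n\, n^{mn}\, f(c)^{n-1}$. -/
/-!
Over `ℂ` write `f = a ∏ (X - α)`. The roots of `F = f ∘ g` come in fibres `g(r) = α`, each of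
size `n`, and `F'(r) = f'(α) · b n r^(n-1)` on the fibre over `α`. Hence the product of `F'` over
the roots of `F` is `(∏ f'(α))^n · (b n)^(mn) · (∏ r)^(n-1)`, and the product of all roots of `F`
is read off from its constant coefficient `F(0) = f(c)`. What remains is a field identity and
a parity computation for the signs.
-/

open Polynomial

theorem Multiset.bind_replicate_eq_nsmul {α : Type*} (s : Multiset α) (n : ℕ) :
    s.bind (fun a => replicate n a) = n • s := by
  induction s using Multiset.induction_on with
  | empty => simp
  | cons a s ih => rw [cons_bind, ih, nsmul_cons, nsmul_singleton]

theorem neg_one_pow_half_eq {R : Type*} [Ring R] {x y : ℕ}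
    (hx : Even x) (hy : Even y) (h : (x : ZMod 4) = y) :
    (-1 : R) ^ (x / 2) = (-1) ^ (y / 2) := by
  obtain ⟨x, rfl⟩ := hx
  obtain ⟨y, rfl⟩ := hy
  rw [ZMod.natCast_eq_natCast_iff'] at h
  rw [neg_one_pow_eq_pow_mod_two, neg_one_pow_eq_pow_mod_two ((y + y) / 2)]
  congr 1
  omega

theorem neg_one_pow_disc_comp_binomial {R : Type*} [Ring R] (m n : ℕ) :
    (-1 : R) ^ (m * n * (m * n - 1) / 2) =
      (-1) ^ (m * n * (n - 1) * (m + 2 * n) / 2) * ((-1) ^ (m * (m - 1) / 2)) ^ n := by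
  have hmn : Even (m * n * (n - 1) * (m + 2 * n)) := by
    rw [mul_assoc m]; exact ((Nat.even_mul_pred_self n).mul_left m).mul_right _
  rw [← pow_mul, ← pow_add, Nat.mul_comm (m * (m - 1) / 2) n,
    ← Nat.mul_div_assoc _ (Nat.even_mul_pred_self m).two_dvd,
    ← Nat.add_div_of_dvd_right hmn.two_dvd]
  refine neg_one_pow_half_eq (Nat.even_mul_pred_self _)
    (hmn.add ((Nat.even_mul_pred_self m).mul_left n)) ?_
  rcases m with _ | m
  · simp
  rcases n with _ | n
  · simp
  have h1 : 1 ≤ (m + 1) * (n + 1) := Nat.one_le_iff_ne_zero.mpr (by positivity)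
  push_cast [Nat.cast_sub h1, Nat.add_sub_cancel]
  generalize (m : ZMod 4) = u, (n : ZMod 4) = v
  revert u v
  decide

namespace Polynomial

section Roots

variable {K L : Type*} [Field K] [Field L] [Algebra K L] [IsAlgClosed L]

theorem map_eval_roots_sub_C {g : L[X]} (hg : g.natDegree ≠ 0) (α : L) :
    (g - C α).roots.map g.eval = Multiset.replicate g.natDegree α := by
  refine Multiset.eq_replicate.mpr ⟨?_, fun x hx => ?_⟩
  · rw [Multiset.card_map, ← (IsAlgClosed.splits _).natDegree_eq_card_roots, natDegree_sub_C]
  · obtain ⟨r, hr, rfl⟩ := Multiset.mem_map.mp hx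
    have hne : g - C α ≠ 0 := fun h => hg (by rw [sub_eq_zero.mp h, natDegree_C])
    simpa [sub_eq_zero] using (mem_roots hne).mp hr

theorem map_eval_roots_comp (f : L[X]) {g : L[X]} (hg : g.natDegree ≠ 0) :
    (f.comp g).roots.map g.eval = g.natDegree • f.roots := by
  rcases eq_or_ne f 0 with rfl | hf
  · simp
  have hsub : ∀ α : L, g - C α ≠ 0 := fun α h => hg (by rw [sub_eq_zero.mp h, natDegree_C])
  conv_lhs => rw [(IsAlgClosed.splits f).eq_prod_roots]
  rw [mul_comp, C_comp, multiset_prod_comp, Multiset.map_map,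
    roots_C_mul _ (leadingCoeff_ne_zero.mpr hf), roots_multiset_prod]
  · simp only [Function.comp_def, sub_comp, X_comp, C_comp]
    rw [Multiset.bind_map, Multiset.map_bind]
    simp only [map_eval_roots_sub_C hg, Multiset.bind_replicate_eq_nsmul]
  · simp [hsub]

theorem map_aeval_aroots_comp (f : K[X]) {g : K[X]} (hg : g.natDegree ≠ 0) :
    ((f.comp g).aroots L).map (aeval · g) = g.natDegree • f.aroots L := by
  have h := map_eval_roots_comp (f.map (algebraMap K L)) (g := g.map (algebraMap K L))
    (by rwa [natDegree_map])
  rw [natDegree_map, ← map_comp] at h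
  simpa only [aroots_def, aeval_def, ← eval_map] using h

theorem prod_aroots_aeval_derivative_comp (f : K[X]) {g : K[X]} (hg : g.natDegree ≠ 0) :
    (((f.comp g).aroots L).map fun r => aeval r (derivative (f.comp g))).prod =
      ((f.aroots L).map fun α => aeval α (derivative f)).prod ^ g.natDegree *
        (((f.comp g).aroots L).map fun r => aeval r (derivative g)).prod := by
  have hfibre : ((f.comp g).aroots L).map (fun r => aeval (aeval r g) (derivative f)) =
      (((f.comp g).aroots L).map (aeval · g)).map (aeval · (derivative f)) := by
    rw [Multiset.map_map]; rfl
  simp only [derivative_comp, map_mul, aeval_comp, Multiset.prod_map_mul]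
  rw [mul_comm, hfibre, map_aeval_aroots_comp f hg, Multiset.map_nsmul, Multiset.prod_nsmul]

theorem algebraMap_coeff_zero_eq_prod_aroots (p : K[X]) :
    algebraMap K L (p.coeff 0) =
      (-1) ^ p.natDegree * algebraMap K L p.leadingCoeff * (p.aroots L).prod := by
  simpa using
    (IsAlgClosed.splits (p.map (algebraMap K L))).coeff_zero_eq_leadingCoeff_mul_prod_roots

end Roots

section Binomial

variable {R : Type*} [Semiring R] {b : R} (c : R) {n : ℕ}

theorem natDegree_C_mul_X_pow_add_C (hb : b ≠ 0) : (C b * X ^ n + C c).natDegree = n := by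
  rw [natDegree_add_C, natDegree_C_mul_X_pow n b hb]

theorem leadingCoeff_C_mul_X_pow_add_C (hb : b ≠ 0) (hn : n ≠ 0) :
    (C b * X ^ n + C c).leadingCoeff = b := by
  rw [leadingCoeff_add_of_degree_lt', leadingCoeff_C_mul_X_pow]
  rw [degree_C_mul_X_pow n hb]
  exact degree_C_le.trans_lt (by exact_mod_cast Nat.pos_of_ne_zero hn)

end Binomial

theorem prod_aeval_derivative_C_mul_X_pow_add_C {R A : Type*} [CommSemiring R] [CommSemiring A]
    [Algebra R A] (b c : R) (n : ℕ) (s : Multiset A) :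
    (s.map fun r => aeval r (derivative (C b * X ^ n + C c))).prod =
      (algebraMap R A b * n) ^ Multiset.card s * s.prod ^ (n - 1) := by
  simp only [derivative_add, derivative_C_mul, derivative_X_pow, derivative_C, add_zero, map_mul,
    map_natCast, aeval_C, map_pow, aeval_X, ← mul_assoc, Multiset.prod_map_mul,
    Multiset.map_const', Multiset.prod_replicate, Multiset.prod_map_pow, Multiset.map_id']

end Polynomial

/-- The closing computation, with `P = ∏ f'(α)` over the roots of `f`, `Q = ∏ r` over the roots
of `f ∘ g`, and `f(c)` expressed through `Q` on the right. -/
theorem disc_comp_binomial_identity {K : Type*} [Field K] {m n : ℕ} (hm : 1 ≤ m) (hn : 1 ≤ n)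
    {a b P Q : K} (N : K) (ha : a ≠ 0) (hb : b ≠ 0) :
    (-1) ^ (m * n * (m * n - 1) / 2) / (a * b ^ m) *
      ((a * b ^ m) ^ (m * n - 1) * (P ^ n * ((b * N) ^ (m * n) * Q ^ (n - 1)))) =
    (-1) ^ (m * n * (n - 1) * (m + 2 * n) / 2) * a ^ (n - 1) * b ^ (m * (m * n - 1)) *
      ((-1) ^ (m * (m - 1) / 2) / a * (a ^ (m - 1) * P)) ^ n * N ^ (m * n) *
      ((-1) ^ (m * n) * (a * b ^ m) * Q) ^ (n - 1) := by
  have hsign : ((-1 : K) ^ (m * n)) ^ (n - 1) = 1 := by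
    rw [← pow_mul, mul_assoc]; exact ((Nat.even_mul_pred_self n).mul_left m).neg_one_pow
  rw [neg_one_pow_disc_comp_binomial, mul_assoc ((-1 : K) ^ (m * n)), mul_pow _ (_ * Q), hsign,
    one_mul]
  obtain ⟨m, rfl⟩ := Nat.exists_eq_add_of_le' hm
  obtain ⟨n, rfl⟩ := Nat.exists_eq_add_of_le' hn
  rw [show (m + 1) * (n + 1) = m * n + m + n + 1 by ring]
  simp only [Nat.add_sub_cancel, div_mul_eq_mul_div, div_pow]
  field_simp
  ring

theorem disc_comp_binomial (f : Polynomial ℚ) (m n : ℕ) (a b c : ℚ)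
    (hm : 1 ≤ m) (hn : 1 ≤ n) (hfm : f.natDegree = m) (ha : f.leadingCoeff = a)
    (hb : b ≠ 0) :
    disc (f.comp (C b * X ^ n + C c)) =
      (-1 : ℂ) ^ (m * n * (n - 1) * (m + 2 * n) / 2) * (a : ℂ) ^ (n - 1) *
        (b : ℂ) ^ (m * (m * n - 1)) * disc f ^ n * (n : ℂ) ^ (m * n) *
        ((f.eval c : ℚ) : ℂ) ^ (n - 1) := by
  set F := f.comp (C b * X ^ n + C c)
  have hg : (C b * X ^ n + C c).natDegree = n := natDegree_C_mul_X_pow_add_C c hb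
  have hFdeg : F.natDegree = m * n := by rw [natDegree_comp, hfm, hg]
  have hFlc : F.leadingCoeff = a * b ^ m := by
    rw [leadingCoeff_comp (by rw [hg]; omega), ha, hfm,
      leadingCoeff_C_mul_X_pow_add_C c hb (by omega)]
  have hFc : F.coeff 0 = f.eval c := by
    simp [F, coeff_zero_eq_eval_zero, zero_pow (by omega : n ≠ 0)]
  have hcard : Multiset.card (F.aroots ℂ) = m * n := by
    rw [← hFdeg]; exact IsAlgClosed.card_roots_map_eq_natDegree_from_simpleRing _ _
  have hprod :
      ((F.coeff 0 : ℚ) : ℂ) = (-1) ^ (m * n) * ((a * b ^ m : ℚ) : ℂ) * (F.aroots ℂ).prod := by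
    simpa [hFdeg, hFlc] using algebraMap_coeff_zero_eq_prod_aroots (L := ℂ) F
  have ha0 : (a : ℂ) ≠ 0 := by
    rw [← ha]; exact_mod_cast leadingCoeff_ne_zero.mpr (by rintro rfl; simp at hfm; omega)
  simp only [disc, res, hFdeg, hFlc, natDegree_derivative, hfm, ha]
  rw [prod_aroots_aeval_derivative_comp f (by omega), hg, prod_aeval_derivative_C_mul_X_pow_add_C,
    hcard, ← hFc, hprod]
  push_cast [eq_ratCast]
  exact disc_comp_binomial_identity hm hn _ ha0 (by exact_mod_cast hb)
end

section
/- Let $m,n\ge 1$, $p$ prime, $T(x)=\Phi_{p^m}(\Phi_{2^n}(x))$, $T(\theta)=0$, and $K=\mathbb{Q}(\theta)$. Then the index $[\mathcal{O}_K:\mathbb{Z}[\theta]]$ is not divisible by $p$. -/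
/-!
Write `k = 2 ^ (n - 1)`, so that `Φ_{2^n} = X ^ k + 1`. Then `T = Φ_{p^m}(X ^ k + 1)` arises from
the `p`-Eisenstein polynomial `Φ_{p^m}(X + 1)` by substituting `X ^ k`, so it is `p`-Eisenstein
itself and is the minimal polynomial of `θ` over `ℤ`. For an Eisenstein generator, `p • z ∈ ℤ[θ]`
forces `z ∈ ℤ[θ]` for every algebraic integer `z`; hence the finite group `𝓞 K / ℤ[θ]` has no
element of order `p`, and by Cauchy's theorem `p` does not divide its order.
-/

open Polynomial NumberField

theorem Polynomial.IsEisensteinAt.expand {R : Type*} [CommSemiring R] {f : R[X]} {P : Ideal R}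
    (hf : f.IsEisensteinAt P) {k : ℕ} (hk : 0 < k) : (expand R k f).IsEisensteinAt P where
  leading := by rw [leadingCoeff_expand hk]; exact hf.leading
  mem {n} hn := by
    rw [coeff_expand hk]
    split_ifs with hkn
    · obtain ⟨j, rfl⟩ := hkn
      rw [natDegree_expand, mul_comm] at hn
      rw [Nat.mul_div_cancel_left j hk]
      exact hf.mem (Nat.lt_of_mul_lt_mul_right hn)
    · exact P.zero_mem
  notMem := by simpa [coeff_expand hk] using hf.notMem

theorem Polynomial.cyclotomic_two_pow (R : Type*) [CommRing R] {n : ℕ} (hn : 0 < n) :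
    cyclotomic (2 ^ n) R = X ^ 2 ^ (n - 1) + 1 := by
  obtain ⟨n, rfl⟩ := Nat.exists_eq_add_one_of_ne_zero hn.ne'
  rw [cyclotomic_prime_pow_eq_geom_sum Nat.prime_two]
  simp [Finset.sum_range_succ, add_comm]

theorem cyclotomic_prime_pow_comp_X_pow_add_one_isEisensteinAt (p : ℕ) [Fact p.Prime] {m k : ℕ}
    (hm : 0 < m) (hk : 0 < k) :
    ((cyclotomic (p ^ m) ℤ).comp (X ^ k + 1)).IsEisensteinAt (Submodule.span ℤ {(p : ℤ)}) := by
  obtain ⟨m, rfl⟩ := Nat.exists_eq_add_one_of_ne_zero hm.ne'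
  have := (cyclotomic_prime_pow_comp_X_add_one_isEisensteinAt p m).expand hk
  rwa [expand_eq_comp_X_pow, comp_assoc, add_comp, X_comp, one_comp] at this

theorem AddSubgroup.not_dvd_index_of_nsmul_mem_imp_mem {G : Type*} [AddCommGroup G]
    (H : AddSubgroup G) [H.FiniteIndex] {p : ℕ} (hp : p.Prime)
    (hH : ∀ y, p • y ∈ H → y ∈ H) : ¬ p ∣ H.index := by
  have := Fact.mk hp
  intro hdvd
  obtain ⟨g, hg⟩ := exists_prime_addOrderOf_dvd_card' (G := G ⧸ H) p hdvd
  obtain ⟨y, rfl⟩ := QuotientAddGroup.mk_surjective g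
  have : (y : G ⧸ H) = 0 := by
    rw [QuotientAddGroup.eq_zero_iff]
    apply hH
    rw [← QuotientAddGroup.eq_zero_iff, QuotientAddGroup.mk_nsmul, ← hg, addOrderOf_nsmul_eq_zero]
  rw [this, addOrderOf_zero] at hg
  exact hp.one_lt.ne' hg.symm

theorem IsIntegrallyClosed.eq_minpoly_of_irreducible_of_monic {R S : Type*} [CommRing R]
    [IsDomain R] [IsIntegrallyClosed R] [CommRing S] [IsDomain S] [Algebra R S]
    [Module.IsTorsionFree R S] {f : R[X]} (hirr : Irreducible f) (hmo : f.Monic) {x : S}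
    (hx : aeval x f = 0) : f = minpoly R x := by
  have hint : IsIntegral R x := ⟨f, hmo, hx⟩
  refine eq_of_monic_of_associated hmo (minpoly.monic hint) ?_
  exact ((minpoly.prime_of_isIntegrallyClosed hint).irreducible.associated_of_dvd hirr
    (minpoly.isIntegrallyClosed_dvd hint hx)).symm

theorem Polynomial.IsEisensteinAt.eq_minpoly {R S : Type*} [CommRing R] [IsDomain R]
    [IsIntegrallyClosed R] [CommRing S] [IsDomain S] [Algebra R S] [Module.IsTorsionFree R S]
    {f : R[X]} {P : Ideal R} (hf : f.IsEisensteinAt P) (hP : P.IsPrime) (hmo : f.Monic) {x : S}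
    (hx : aeval x f = 0) : f = minpoly R x := by
  have hdeg : 0 < f.natDegree := hmo.natDegree_pos.mpr fun h ↦ by simp [h] at hx
  exact IsIntegrallyClosed.eq_minpoly_of_irreducible_of_monic
    (hf.irreducible hP hmo.isPrimitive hdeg) hmo hx

namespace NumberField.RingOfIntegers

variable {K : Type*} [Field K] {θ : 𝓞 K}

theorem coe_mem_adjoin_singleton_iff {y : 𝓞 K} :
    (y : K) ∈ Algebra.adjoin ℤ {(θ : K)} ↔ y ∈ Algebra.adjoin ℤ {θ} := by
  rw [show (θ : K) = IsScalarTower.toAlgHom ℤ (𝓞 K) K θ from rfl,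
    ← AlgHom.map_adjoin_singleton, Subalgebra.mem_map]
  exact ⟨fun ⟨z, hz, hzy⟩ ↦ coe_injective hzy ▸ hz, fun hy ↦ ⟨y, hy, rfl⟩⟩

variable [NumberField K]

theorem finiteIndex_adjoin_singleton (hgen : Algebra.adjoin ℚ {(θ : K)} = ⊤) :
    (Subalgebra.toSubmodule (Algebra.adjoin ℤ {θ})).toAddSubgroup.FiniteIndex := by
  have hrank : Module.finrank ℤ (Subalgebra.toSubmodule (Algebra.adjoin ℤ {θ})) =
      Module.finrank ℤ (𝓞 K) := by
    rw [RingOfIntegers.rank, (PowerBasis.ofAdjoinEqTop θ.isIntegral_coe.tower_top hgen).finrank,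
      PowerBasis.ofAdjoinEqTop_dim,
      minpoly.isIntegrallyClosed_eq_field_fractions ℚ K θ.isIntegral,
      (minpoly.monic θ.isIntegral).natDegree_map, ← Algebra.adjoin.powerBasis'_dim θ.isIntegral,
      ← PowerBasis.finrank]
    rfl
  exact @AddSubgroup.finiteIndex_of_finite_quotient _ _ _
    (Submodule.finiteQuotientOfFreeOfRankEq _ hrank)

theorem mem_adjoin_of_prime_smul_mem_of_isEisensteinAt (hgen : Algebra.adjoin ℚ {(θ : K)} = ⊤)
    {p : ℤ} (hp : Prime p) (hei : (minpoly ℤ (θ : K)).IsEisensteinAt (Submodule.span ℤ {p}))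
    {y : 𝓞 K} (hy : p • y ∈ Algebra.adjoin ℤ {θ}) : y ∈ Algebra.adjoin ℤ {θ} := by
  rw [← coe_mem_adjoin_singleton_iff] at hy ⊢
  exact mem_adjoin_of_smul_prime_smul_of_minpoly_isEisensteinAt
    (B := PowerBasis.ofAdjoinEqTop θ.isIntegral_coe.tower_top hgen) hp θ.isIntegral_coe
    y.isIntegral_coe (by simpa using hy) hei

theorem not_dvd_index_adjoin_of_isEisensteinAt (hgen : Algebra.adjoin ℚ {(θ : K)} = ⊤) {p : ℕ}
    (hp : p.Prime) (hei : (minpoly ℤ (θ : K)).IsEisensteinAt (Submodule.span ℤ {(p : ℤ)})) :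
    ¬ p ∣ (Subalgebra.toSubmodule (Algebra.adjoin ℤ {θ})).toAddSubgroup.index := by
  have := finiteIndex_adjoin_singleton hgen
  refine AddSubgroup.not_dvd_index_of_nsmul_mem_imp_mem _ hp fun y hy ↦ ?_
  exact mem_adjoin_of_prime_smul_mem_of_isEisensteinAt hgen (Nat.prime_iff_prime_int.mp hp) hei
    (by rwa [natCast_zsmul])

end NumberField.RingOfIntegers

theorem index_not_div_p (m n p : ℕ) (hm : 0 < m) (hn : 0 < n) (hp : p.Prime)
    (K : Type*) [Field K] [NumberField K] (θ : NumberField.RingOfIntegers K)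
    (hroot : aeval (θ : K) ((cyclotomic (p ^ m) ℚ).comp (cyclotomic (2 ^ n) ℚ)) = 0)
    (hgen : Algebra.adjoin ℚ {(θ : K)} = ⊤) :
    ¬ p ∣ (Subalgebra.toSubmodule
        (Algebra.adjoin ℤ {θ} : Subalgebra ℤ (NumberField.RingOfIntegers K))).toAddSubgroup.index := by
  have := Fact.mk hp
  have hk : 2 ^ (n - 1) ≠ 0 := (Nat.two_pow_pos _).ne'
  set T : ℤ[X] := (cyclotomic (p ^ m) ℤ).comp (X ^ 2 ^ (n - 1) + 1)
  have hei : T.IsEisensteinAt (Submodule.span ℤ {(p : ℤ)}) :=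
    cyclotomic_prime_pow_comp_X_pow_add_one_isEisensteinAt p hm (Nat.pos_of_ne_zero hk)
  have hmonic : T.Monic := by
    have hXk : (X ^ 2 ^ (n - 1) + 1 : ℤ[X]) = X ^ 2 ^ (n - 1) + C 1 := by rw [C_1]
    refine (cyclotomic.monic _ ℤ).comp ?_ ?_ <;> rw [hXk]
    · exact monic_X_pow_add_C 1 hk
    · rwa [natDegree_X_pow_add_C]
  have hTθ : aeval (θ : K) T = 0 := by
    rwa [← aeval_map_algebraMap ℚ, Polynomial.map_comp, map_cyclotomic, Polynomial.map_add,
      Polynomial.map_pow, map_X, Polynomial.map_one, ← cyclotomic_two_pow ℚ hn]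
  have hprime : (Ideal.span {(p : ℤ)}).IsPrime :=
    Ideal.span_singleton_prime (mod_cast hp.ne_zero) |>.mpr (Nat.prime_iff_prime_int.mp hp)
  exact RingOfIntegers.not_dvd_index_adjoin_of_isEisensteinAt hgen hp
    (hei.eq_minpoly hprime hmonic hTθ ▸ hei)
end

section
/- The polynomial $\Phi_4(\Phi_{3^n}(x))$ is reducible over $\mathbb{Q}$ for all positive integers $n$. -/
/-!
Writing `q = x ^ (3 ^ (n - 1))`, we have `Φ_{3^n}(x) = q² + q + 1`, and the quartic identity
`(q² + q + 1)² + 1 = (q² + 1)(q² + 2q + 2)` splits `Φ₄(Φ_{3^n}(x))` into two factors of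
degree `2 · 3^(n-1)` each.
-/

open Polynomial

namespace Polynomial

theorem cyclotomic_prime_pow_succ_eq_comp {R : Type*} [CommRing R] {p : ℕ} (hp : p.Prime)
    (k : ℕ) : cyclotomic (p ^ (k + 1)) R = (cyclotomic p R).comp (X ^ p ^ k) := by
  have hcyc := cyclotomic_prime_pow_eq_geom_sum (R := R) hp (n := 0)
  rw [zero_add, pow_one, pow_zero, pow_one] at hcyc
  simp only [cyclotomic_prime_pow_eq_geom_sum hp, hcyc, sum_comp, X_pow_comp]

theorem cyclotomic_four_comp_cyclotomic_three (R : Type*) [CommRing R] :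
    (cyclotomic 4 R).comp (cyclotomic 3 R) = (X ^ 2 + 1) * (X ^ 2 + 2 * X + 2) := by
  have hcyc4 : cyclotomic 4 R = X ^ 2 + 1 := by
    rw [show 4 = 2 ^ (1 + 1) by rfl, cyclotomic_prime_pow_succ_eq_comp Nat.prime_two,
      cyclotomic_two]
    simp
  rw [hcyc4, cyclotomic_three]
  simp only [add_comp, pow_comp, X_comp, one_comp]
  ring

theorem not_irreducible_mul_comp {R : Type*} [CommRing R] [IsDomain R] {a b q : R[X]}
    (ha : 0 < a.natDegree) (hb : 0 < b.natDegree) (hq : 0 < q.natDegree) :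
    ¬ Irreducible ((a * b).comp q) := by
  intro hirr
  rcases hirr.isUnit_or_isUnit (mul_comp a b q) with hunit | hunit <;>
  · have hdeg := natDegree_eq_zero_of_isUnit hunit
    rw [natDegree_comp] at hdeg
    exact (Nat.mul_pos ‹_› hq).ne' hdeg

end Polynomial

theorem phi4_comp_phi3pow_reducible (n : ℕ) (hn : 0 < n) :
    ¬ Irreducible ((cyclotomic 4 ℚ).comp (cyclotomic (3 ^ n) ℚ)) := by
  obtain ⟨k, rfl⟩ := Nat.exists_eq_add_of_lt hn
  rw [zero_add, cyclotomic_prime_pow_succ_eq_comp Nat.prime_three, ← comp_assoc,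
    cyclotomic_four_comp_cyclotomic_three]
  refine not_irreducible_mul_comp ?_ ?_ ?_
  · rw [show (X ^ 2 + 1 : ℚ[X]).natDegree = 2 by compute_degree!]
    norm_num
  · rw [show (X ^ 2 + 2 * X + 2 : ℚ[X]).natDegree = 2 by compute_degree!]
    norm_num
  · rw [natDegree_X_pow]
    positivity
end
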